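/- arXiv:1902.01296 — 3 statements merged into one kernel-verified Lean document; each statement's English description precedes it below -/
import Mathlib

section
/- The function u(x₁,x₂) = x₂² sin(x₁) satisfies ∂²u/∂x₁² + (1/2) x₂² ∂²u/∂x₂² = 0 at every point of ℝ², vanishes on the boundary of the cylinder C = (0,π) × ℝ, and is strictly positive for 0 < x₁ < π and x₂ ≠ 0. -/
open Real

lemma deriv_deriv_const_mul_sin (c x : ℝ) :
    deriv (deriv fun s => c * sin s) x = -(c * sin x) := by
  have hfirst : deriv (fun s => c * sin s) = fun s => c * cos s := by
    funext s
    rw [deriv_const_mul _ differentiableAt_sin, Real.deriv_sin]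
  rw [hfirst, deriv_const_mul _ differentiableAt_cos, Real.deriv_cos, mul_neg]

lemma deriv_deriv_sq_mul_const (c x : ℝ) :
    deriv (deriv fun s : ℝ => s ^ 2 * c) x = 2 * c := by
  have hfirst : deriv (fun s : ℝ => s ^ 2 * c) = fun s => 2 * c * s := by
    funext s
    rw [deriv_mul_const (differentiableAt_pow 2), deriv_pow_field]
    ring
  rw [hfirst, deriv_const_mul _ differentiableAt_id, deriv_id'', mul_one]

theorem stmt_1 (v : ℝ → ℝ → ℝ)
    (hv : v = fun x₁ x₂ => x₂ ^ 2 * Real.sin x₁) :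
    (∀ x₁ x₂ : ℝ,
      deriv (deriv (fun s => v s x₂)) x₁ +
      (1 / 2) * x₂ ^ 2 * deriv (deriv (fun s => v x₁ s)) x₂ = 0) ∧
    (∀ x₁ x₂ : ℝ, (x₁ = 0 ∨ x₁ = π) → v x₁ x₂ = 0) ∧
    (∀ x₁ x₂ : ℝ, 0 < x₁ → x₁ < π → x₂ ≠ 0 → 0 < v x₁ x₂) := by
  subst hv
  refine ⟨fun x₁ x₂ => ?_, fun x₁ x₂ hx₁ => ?_, fun x₁ x₂ h₀ hπ hx₂ => ?_⟩
  · rw [deriv_deriv_const_mul_sin, deriv_deriv_sq_mul_const]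
    ring
  · rcases hx₁ with rfl | rfl <;> simp
  · exact mul_pos (sq_pos_iff.mpr hx₂) (sin_pos_of_pos_of_lt_pi h₀ hπ)
end

section
/- Let Ω ⊂ ℝⁿ be a bounded open set contained in the slab {x : 0 < x₁ < d}, with d small. Suppose u ∈ C²(Ω) ∩ C(closure Ω) satisfies tr(A(x)D²u) + b(x)·Du + c(x)u ≥ 0 in Ω with A positive semidefinite, A₁₁(x) ≥ λ > 0, |b(x)| ≤ γ, 0 < c(x), c(x)/λ ≤ K, and u bounded above with u ≤ 0 on ∂Ω. If (e^{1+dγ/λ}/(1+dγ/λ)) d² K < 1, then u ≤ 0 in Ω. -/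
/-!
Write L = tr(A D²) + b·D + c. Take α = 1/d + γ/λ and the barrier φ(x) = e^{αd} + 1 - e^{αx₁},
which is at least 1 on the closed slab. In Ω the second-order and drift terms of Lφ are at most
-α(αλ - γ)e^{αx₁} = -(αλ/d)e^{αx₁} ≤ -αλ/d, while cφ ≤ Kλe^{αd}; the smallness condition says
exactly Ke^{αd} < α/d, so Lφ < 0. If u were positive somewhere, the maximum t > 0 of u/φ over
the compact closure of Ω would be attained at a point x₀ of Ω, where u - tφ has a local maximum
equal to 0. There L(u - tφ) ≤ 0 (the Hessian is negative semidefinite and A is positive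
semidefinite), so Lu(x₀) ≤ t Lφ(x₀) < 0, contradicting Lu ≥ 0.
-/

open Real RealInnerProductSpace

/-- The Hessian matrix of `u` at `x` (entries: second partial derivatives). -/
noncomputable def hessMatrix {n : ℕ} (u : EuclideanSpace ℝ (Fin n) → ℝ)
    (x : EuclideanSpace ℝ (Fin n)) : Matrix (Fin n) (Fin n) ℝ :=
  Matrix.of fun i j =>
    fderiv ℝ (fun y => fderiv ℝ u y (EuclideanSpace.single j 1)) x (EuclideanSpace.single i 1)

open Filter Topology
open scoped Matrix

section
variable {E F : Type*} [NormedAddCommGroup E] [NormedSpace ℝ E] [NormedAddCommGroup F]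
  [NormedSpace ℝ F] {f : E → F} {x : E}

theorem ContDiffAt.eventually_differentiableAt (hf : ContDiffAt ℝ 2 f x) :
    ∀ᶠ y in 𝓝 x, DifferentiableAt ℝ f y :=
  (hf.eventually (by simp)).mono fun _ hy => hy.differentiableAt (by norm_num)

theorem ContDiffAt.differentiableAt_fderiv (hf : ContDiffAt ℝ 2 f x) :
    DifferentiableAt ℝ (fderiv ℝ f) x :=
  (hf.fderiv_right (m := 1) (by norm_num)).differentiableAt (by norm_num)

end

theorem IsLocalMax.deriv_deriv_nonpos {f : ℝ → ℝ} {a : ℝ} (h : IsLocalMax f a)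
    (hc : ContinuousAt f a) : deriv (deriv f) a ≤ 0 := by
  by_contra! hpos
  -- by the second-derivative test `a` is then also a local minimum, so `f` is locally constant
  have hmin : IsLocalMin f a := isLocalMin_of_deriv_deriv_pos hpos h.deriv_eq_zero hc
  have hconst : f =ᶠ[𝓝 a] fun _ => f a :=
    (h.and hmin).mono fun _ hy => le_antisymm hy.1 hy.2
  simp [hconst.deriv.deriv_eq] at hpos

theorem IsLocalMax.fderiv_fderiv_apply_self_nonpos {E : Type*} [NormedAddCommGroup E]
    [NormedSpace ℝ E] {f : E → ℝ} {a : E} (h : IsLocalMax f a)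
    (hf : ∀ᶠ y in 𝓝 a, DifferentiableAt ℝ f y) (hf' : DifferentiableAt ℝ (fderiv ℝ f) a)
    (v : E) : fderiv ℝ (fderiv ℝ f) a v v ≤ 0 := by
  set line : ℝ → E := fun s => a + s • v
  have hline : ∀ s, HasDerivAt line v s := fun s => by
    simpa [line] using ((hasDerivAt_id s).smul_const v).const_add a
  have hline0 : line 0 = a := by simp [line]
  have hcont : ContinuousAt line 0 := (hline 0).continuousAt
  have hderiv : deriv (f ∘ line) =ᶠ[𝓝 0] fun s => fderiv ℝ f (line s) v := by
    filter_upwards [hcont.tendsto.eventually (hline0 ▸ hf)] with s hs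
    exact (hs.hasFDerivAt.comp_hasDerivAt s (hline s)).deriv
  have hderiv2 :
      HasDerivAt (fun s => fderiv ℝ f (line s) v) (fderiv ℝ (fderiv ℝ f) a v v) 0 := by
    have hD : HasDerivAt (fun s => fderiv ℝ f (line s)) (fderiv ℝ (fderiv ℝ f) a v) 0 := by
      rw [← hline0] at hf' ⊢
      exact hf'.hasFDerivAt.comp_hasDerivAt 0 (hline 0)
    exact (ContinuousLinearMap.apply ℝ ℝ v).hasFDerivAt.comp_hasDerivAt 0 hD
  rw [← hderiv2.deriv, ← hderiv.deriv_eq]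
  rw [← hline0] at h hf
  exact IsLocalMax.deriv_deriv_nonpos (h.comp_continuous hcont)
    (hf.self_of_nhds.continuousAt.comp hcont)

open scoped MatrixOrder in
theorem Matrix.PosSemidef.trace_mul_nonpos {ι : Type*} [Fintype ι] {A M : Matrix ι ι ℝ}
    (hA : A.PosSemidef) (hM : ∀ v, v ⬝ᵥ M *ᵥ v ≤ 0) : (A * M).trace ≤ 0 := by
  classical
  -- `tr (A M) = tr (√A M √A) = ∑ₖ sₖ ⬝ᵥ M *ᵥ sₖ`, where the `sₖ` are the rows of `√A`
  set S := CFC.sqrt A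
  have hSS : S * S = A := CFC.sqrt_mul_sqrt_self A hA.nonneg
  have hST : Sᵀ = S := by
    simpa using (Matrix.nonneg_iff_posSemidef.mp (CFC.sqrt_nonneg A)).isHermitian.eq
  rw [← hSS, Matrix.mul_assoc, Matrix.trace_mul_comm, Matrix.trace]
  refine Finset.sum_nonpos fun k _ => ?_
  rw [Matrix.diag_apply, Matrix.mul_mul_apply, hST]
  exact hM _

section
variable {n : ℕ} {f g : EuclideanSpace ℝ (Fin n) → ℝ} {x : EuclideanSpace ℝ (Fin n)}

theorem hessMatrix_apply (hf : DifferentiableAt ℝ (fderiv ℝ f) x) (i j : Fin n) :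
    hessMatrix f x i j =
      fderiv ℝ (fderiv ℝ f) x (EuclideanSpace.single i 1) (EuclideanSpace.single j 1) := by
  simp [hessMatrix, fderiv_clm_apply hf (differentiableAt_const _)]

theorem dotProduct_hessMatrix_mulVec (hf : DifferentiableAt ℝ (fderiv ℝ f) x) (v : Fin n → ℝ) :
    v ⬝ᵥ hessMatrix f x *ᵥ v =
      fderiv ℝ (fderiv ℝ f) x (WithLp.toLp 2 v) (WithLp.toLp 2 v) := by
  have hv : WithLp.toLp 2 v = ∑ i, v i • EuclideanSpace.single i (1 : ℝ) := by
    ext; simp [Pi.single_apply]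
  simp only [hv, map_sum, map_smul, FunLike.coe_sum, Finset.sum_apply,
    FunLike.coe_smul, Pi.smul_apply, smul_eq_mul, dotProduct, Matrix.mulVec,
    hessMatrix_apply hf, Finset.mul_sum]
  rw [Finset.sum_comm]
  exact Finset.sum_congr rfl fun i _ => Finset.sum_congr rfl fun j _ => by ring

theorem IsLocalMax.trace_mul_hessMatrix_nonpos {A : Matrix (Fin n) (Fin n) ℝ}
    (hmax : IsLocalMax f x) (hf : ContDiffAt ℝ 2 f x) (hA : A.PosSemidef) :
    (A * hessMatrix f x).trace ≤ 0 :=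
  hA.trace_mul_nonpos fun v => by
    rw [dotProduct_hessMatrix_mulVec hf.differentiableAt_fderiv]
    exact hmax.fderiv_fderiv_apply_self_nonpos hf.eventually_differentiableAt
      hf.differentiableAt_fderiv _

theorem hessMatrix_add_smul (hf : ContDiffAt ℝ 2 f x) (hg : ContDiffAt ℝ 2 g x) (t : ℝ) :
    hessMatrix (f + t • g) x = hessMatrix f x + t • hessMatrix g x := by
  have hfg : ContDiffAt ℝ 2 (f + t • g) x := hf.add (hg.const_smul t)
  have hD : fderiv ℝ (f + t • g) =ᶠ[𝓝 x] fderiv ℝ f + t • fderiv ℝ g := by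
    filter_upwards [hf.eventually_differentiableAt, hg.eventually_differentiableAt]
      with y hfy hgy
    rw [fderiv_add hfy (hgy.const_smul t), fderiv_const_smul hgy]
    rfl
  have hD2 : fderiv ℝ (fderiv ℝ (f + t • g)) x =
      fderiv ℝ (fderiv ℝ f) x + t • fderiv ℝ (fderiv ℝ g) x := by
    rw [hD.fderiv_eq, fderiv_add hf.differentiableAt_fderiv
      (hg.differentiableAt_fderiv.const_smul t), fderiv_const_smul hg.differentiableAt_fderiv]
  ext i j
  simp [hessMatrix_apply hfg.differentiableAt_fderiv, hessMatrix_apply hf.differentiableAt_fderiv,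
    hessMatrix_apply hg.differentiableAt_fderiv, hD2]

theorem inner_gradient_add_smul (hf : DifferentiableAt ℝ f x) (hg : DifferentiableAt ℝ g x)
    (t : ℝ) (v : EuclideanSpace ℝ (Fin n)) :
    ⟪v, gradient (f + t • g) x⟫ = ⟪v, gradient f x⟫ + t * ⟪v, gradient g x⟫ := by
  simp [inner_gradient_right, fderiv_add hf (hg.const_smul t), fderiv_const_smul hg]

theorem HasDerivAt.hasFDerivAt_comp_coord {φ : ℝ → ℝ} {φ' : ℝ} (i : Fin n)
    (hφ : HasDerivAt φ φ' (x i)) :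
    HasFDerivAt (fun y : EuclideanSpace ℝ (Fin n) => φ (y i))
      (φ' • EuclideanSpace.proj (𝕜 := ℝ) i) x := by
  refine (hφ.hasFDerivAt.comp x (EuclideanSpace.proj (𝕜 := ℝ) i).hasFDerivAt).congr_fderiv ?_
  ext v
  simp [mul_comm]

theorem hessMatrix_comp_coord {φ φ' : ℝ → ℝ} {φ'' : ℝ} (i : Fin n)
    (hφ : ∀ s, HasDerivAt φ (φ' s) s) (hφ' : HasDerivAt φ' φ'' (x i)) :
    hessMatrix (fun y => φ (y i)) x = Matrix.single i i φ'' := by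
  ext k j
  have hD : ∀ y, fderiv ℝ (fun y : EuclideanSpace ℝ (Fin n) => φ (y i)) y
      (EuclideanSpace.single j 1) = (EuclideanSpace.single j (1 : ℝ)) i * φ' (y i) := fun y => by
    simp [((hφ (y i)).hasFDerivAt_comp_coord i).fderiv, mul_comm]
  simp only [hessMatrix, Matrix.of_apply, hD]
  rw [((hφ'.hasFDerivAt_comp_coord i).const_mul _).fderiv]
  simp only [Matrix.single_apply, smul_apply, PiLp.proj_apply,
    PiLp.single_apply, smul_eq_mul]
  grind

theorem inner_gradient_comp_coord {φ : ℝ → ℝ} {φ' : ℝ} (i : Fin n) (hφ : HasDerivAt φ φ' (x i))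
    (v : EuclideanSpace ℝ (Fin n)) :
    ⟪v, gradient (fun y => φ (y i)) x⟫ = φ' * v i := by
  simp [inner_gradient_right, (hφ.hasFDerivAt_comp_coord i).fderiv]

end

section
variable {n : ℕ} {A : EuclideanSpace ℝ (Fin n) → Matrix (Fin n) (Fin n) ℝ}
  {b : EuclideanSpace ℝ (Fin n) → EuclideanSpace ℝ (Fin n)} {c : EuclideanSpace ℝ (Fin n) → ℝ}
  {f g : EuclideanSpace ℝ (Fin n) → ℝ} {x : EuclideanSpace ℝ (Fin n)}

noncomputable def ellipticOp (A : EuclideanSpace ℝ (Fin n) → Matrix (Fin n) (Fin n) ℝ)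
    (b : EuclideanSpace ℝ (Fin n) → EuclideanSpace ℝ (Fin n)) (c : EuclideanSpace ℝ (Fin n) → ℝ)
    (f : EuclideanSpace ℝ (Fin n) → ℝ) (x : EuclideanSpace ℝ (Fin n)) : ℝ :=
  (A x * hessMatrix f x).trace + ⟪b x, gradient f x⟫ + c x * f x

theorem ellipticOp_add_smul (hf : ContDiffAt ℝ 2 f x) (hg : ContDiffAt ℝ 2 g x) (t : ℝ) :
    ellipticOp A b c (f + t • g) x = ellipticOp A b c f x + t * ellipticOp A b c g x := by
  simp only [ellipticOp, hessMatrix_add_smul hf hg,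
    inner_gradient_add_smul (hf.differentiableAt (by norm_num)) (hg.differentiableAt (by norm_num)),
    Matrix.mul_add, Matrix.mul_smul, Matrix.trace_add, Matrix.trace_smul, Pi.add_apply,
    Pi.smul_apply, smul_eq_mul]
  ring

theorem IsLocalMax.ellipticOp_nonpos (hmax : IsLocalMax f x) (hf : ContDiffAt ℝ 2 f x)
    (hA : (A x).PosSemidef) (hfx : f x = 0) : ellipticOp A b c f x ≤ 0 := by
  have hgrad : gradient f x = 0 := by rw [gradient, hmax.fderiv_eq_zero, map_zero]
  simpa [ellipticOp, hgrad, hfx] using hmax.trace_mul_hessMatrix_nonpos hf hA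

theorem ellipticOp_comp_coord {φ φ' φ'' : ℝ → ℝ} (i : Fin n)
    (hφ : ∀ s, HasDerivAt φ (φ' s) s) (hφ' : ∀ s, HasDerivAt φ' (φ'' s) s) :
    ellipticOp A b c (fun y => φ (y i)) x =
      φ'' (x i) * A x i i + φ' (x i) * b x i + c x * φ (x i) := by
  simp [ellipticOp, hessMatrix_comp_coord i hφ (hφ' (x i)),
    inner_gradient_comp_coord i (hφ (x i)), Matrix.trace_mul_single, mul_comm]

theorem nonpos_of_ellipticOp_nonneg_of_barrier {Ω : Set (EuclideanSpace ℝ (Fin n))}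
    {u φ : EuclideanSpace ℝ (Fin n) → ℝ} (hΩo : IsOpen Ω) (hΩb : Bornology.IsBounded Ω)
    (hA : ∀ x ∈ Ω, (A x).PosSemidef) (hu : ContDiffOn ℝ 2 u Ω)
    (huc : ContinuousOn u (closure Ω)) (hbdry : ∀ x ∈ frontier Ω, u x ≤ 0)
    (hLu : ∀ x ∈ Ω, 0 ≤ ellipticOp A b c u x) (hφ : ContDiffOn ℝ 2 φ Ω)
    (hφc : ContinuousOn φ (closure Ω)) (hφpos : ∀ x ∈ closure Ω, 0 < φ x)
    (hLφ : ∀ x ∈ Ω, ellipticOp A b c φ x < 0) :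
    ∀ x ∈ Ω, u x ≤ 0 := by
  intro x₁ hx₁
  by_contra! hpos
  obtain ⟨x₀, hx₀, hmax⟩ := hΩb.isCompact_closure.exists_isMaxOn ⟨x₁, subset_closure hx₁⟩
    (huc.div hφc fun y hy => (hφpos y hy).ne')
  set t := u x₀ / φ x₀
  have ht : 0 < t :=
    (div_pos hpos (hφpos x₁ (subset_closure hx₁))).trans_le (hmax (subset_closure hx₁))
  have hx₀Ω : x₀ ∈ Ω := by
    by_contra hx₀Ω
    have hu₀ := hbdry x₀ (by rw [hΩo.frontier_eq]; exact ⟨hx₀, hx₀Ω⟩)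
    exact ht.not_ge (div_nonpos_of_nonpos_of_nonneg hu₀ (hφpos x₀ hx₀).le)
  have hw₀ : (u - t • φ) x₀ = 0 := by
    simp [t, div_mul_cancel₀ _ (hφpos x₀ hx₀).ne']
  have hw : IsLocalMax (u - t • φ) x₀ := by
    filter_upwards [hΩo.mem_nhds hx₀Ω] with y hy
    have := (div_le_iff₀ (hφpos y (subset_closure hy))).1 (hmax (subset_closure hy))
    simp only [hw₀, Pi.sub_apply, Pi.smul_apply, Pi.div_apply, smul_eq_mul] at this ⊢
    linarith
  have hu₀ := hu.contDiffAt (hΩo.mem_nhds hx₀Ω)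
  have hφ₀ := hφ.contDiffAt (hΩo.mem_nhds hx₀Ω)
  have hw₂ : ContDiffAt ℝ 2 (u - t • φ) x₀ := hu₀.sub (hφ₀.const_smul t)
  have hsplit := ellipticOp_add_smul (A := A) (b := b) (c := c) hw₂ hφ₀ t
  rw [sub_add_cancel] at hsplit
  linarith [hLu x₀ hx₀Ω, hw.ellipticOp_nonpos (b := b) (c := c) hw₂ (hA x₀ hx₀Ω) hw₀,
    mul_neg_of_pos_of_neg ht (hLφ x₀ hx₀Ω)]

theorem ellipticOp_exp_barrier_neg {d lam γ K α : ℝ} (hd : 0 < d) (hlam : 0 < lam) (hγ : 0 ≤ γ)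
    (hαd : α * d = 1 + d * (γ / lam)) (hnarrow : exp (α * d) / (α * d) * d ^ 2 * K < 1)
    (i : Fin n) (hx : 0 < x i) (hAx : lam ≤ A x i i) (hbx : ‖b x‖ ≤ γ) (hcx : 0 < c x)
    (hcK : c x / lam ≤ K) :
    ellipticOp A b c (fun y => exp (α * d) + 1 - exp (α * y i)) x < 0 := by
  have hφ : ∀ s, HasDerivAt (fun s => exp (α * d) + 1 - exp (α * s)) (-α * exp (α * s)) s :=
    fun s => by simpa [mul_comm] using ((hasDerivAt_id s).const_mul α).exp.const_sub _
  have hφ' : ∀ s, HasDerivAt (fun s => -α * exp (α * s)) (-α ^ 2 * exp (α * s)) s :=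
    fun s => by simpa [mul_comm, mul_assoc, sq] using
      ((hasDerivAt_id s).const_mul α).exp.const_mul (-α)
  rw [ellipticOp_comp_coord i hφ hφ']
  have hα : 0 < α := pos_of_mul_pos_left (hαd ▸ by positivity) hd.le
  set e := exp (α * x i)
  set E := exp (α * d)
  have he : 1 ≤ e := one_le_exp (mul_nonneg hα.le hx.le)
  have hb : -γ ≤ b x i := neg_le_of_abs_le ((PiLp.norm_apply_le (b x) i).trans hbx)
  have hdrift : lam / d ≤ α * A x i i + b x i :=
    calc lam / d = α * lam + -γ := by
          have hαd' : α * d * lam = lam + d * γ := by rw [hαd]; field_simp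
          field_simp
          linear_combination -hαd'
      _ ≤ α * A x i i + b x i := add_le_add (mul_le_mul_of_nonneg_left hAx hα.le) hb
  have hzeroth : c x * (E + 1 - e) ≤ K * lam * E := by
    have := (div_le_iff₀ hlam).1 hcK
    nlinarith [exp_pos (α * d)]
  have hKE : K * E * d < α := by
    rw [div_mul_eq_mul_div, div_mul_eq_mul_div, div_lt_one (by positivity)] at hnarrow
    nlinarith
  have hKlam : K * lam * E < lam / d * α := by
    rw [div_mul_eq_mul_div, lt_div_iff₀ hd]
    nlinarith
  have hgain : lam / d * α ≤ (α * A x i i + b x i) * α * e :=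
    (mul_le_mul_of_nonneg_right hdrift hα.le).trans
      (le_mul_of_one_le_right (mul_nonneg ((div_pos hlam hd).le.trans hdrift) hα.le) he)
  linarith

end

theorem stmt_8_general (n : ℕ) (hn : 0 < n) (d lam γ K : ℝ) (hd : 0 < d) (hlam : 0 < lam)
    (hγ : 0 ≤ γ)
    (Ω : Set (EuclideanSpace ℝ (Fin n)))
    (hΩo : IsOpen Ω) (hΩb : Bornology.IsBounded Ω)
    (hslab : Ω ⊆ {x | 0 < x ⟨0, hn⟩ ∧ x ⟨0, hn⟩ < d})
    (A : EuclideanSpace ℝ (Fin n) → Matrix (Fin n) (Fin n) ℝ)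
    (b : EuclideanSpace ℝ (Fin n) → EuclideanSpace ℝ (Fin n))
    (c : EuclideanSpace ℝ (Fin n) → ℝ)
    (hA : ∀ x ∈ Ω, (A x).PosSemidef) (hA11 : ∀ x ∈ Ω, lam ≤ A x ⟨0, hn⟩ ⟨0, hn⟩)
    (hb : ∀ x ∈ Ω, ‖b x‖ ≤ γ) (hc : ∀ x ∈ Ω, 0 < c x) (hcK : ∀ x ∈ Ω, c x / lam ≤ K)
    (u : EuclideanSpace ℝ (Fin n) → ℝ)
    (hu2 : ContDiffOn ℝ 2 u Ω) (huc : ContinuousOn u (closure Ω))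
    (hbdry : ∀ x ∈ frontier Ω, u x ≤ 0)
    (hsub : ∀ x ∈ Ω,
      0 ≤ Matrix.trace (A x * hessMatrix u x) + ⟪b x, gradient u x⟫ + c x * u x)
    (hnarrow : Real.exp (1 + d * (γ / lam)) / (1 + d * (γ / lam)) * d ^ 2 * K < 1) :
    ∀ x ∈ Ω, u x ≤ 0 := by
  set i : Fin n := ⟨0, hn⟩
  set α := (1 + d * (γ / lam)) / d
  have hαd : α * d = 1 + d * (γ / lam) := div_mul_cancel₀ _ hd.ne'
  have hα : 0 < α := by positivity
  have hclosure : ∀ x ∈ closure Ω, x i ≤ d :=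
    closure_minimal (fun y hy => (hslab hy).2.le)
      (isClosed_le (EuclideanSpace.proj (𝕜 := ℝ) i).continuous continuous_const)
  refine nonpos_of_ellipticOp_nonneg_of_barrier (φ := fun y => exp (α * d) + 1 - exp (α * y i))
    hΩo hΩb hA hu2 huc hbdry hsub (by fun_prop) (by fun_prop) (fun x hx => ?_) (fun x hx => ?_)
  · have := exp_le_exp.2 (mul_le_mul_of_nonneg_left (hclosure x hx) hα.le)
    linarith
  · exact ellipticOp_exp_barrier_neg hd hlam hγ hαd (hαd ▸ hnarrow) i (hslab hx).1 (hA11 x hx)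
      (hb x hx) (hc x hx) (hcK x hx)

theorem stmt_8 (n : ℕ) (hn : 0 < n) (d lam γ K : ℝ) (hd : 0 < d) (hlam : 0 < lam)
    (hγ : 0 ≤ γ) (hK : 0 ≤ K)
    (Ω : Set (EuclideanSpace ℝ (Fin n)))
    (hΩo : IsOpen Ω) (hΩb : Bornology.IsBounded Ω)
    (hslab : Ω ⊆ {x | 0 < x ⟨0, hn⟩ ∧ x ⟨0, hn⟩ < d})
    (A : EuclideanSpace ℝ (Fin n) → Matrix (Fin n) (Fin n) ℝ)
    (b : EuclideanSpace ℝ (Fin n) → EuclideanSpace ℝ (Fin n))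
    (c : EuclideanSpace ℝ (Fin n) → ℝ)
    (hA : ∀ x ∈ Ω, (A x).PosSemidef) (hA11 : ∀ x ∈ Ω, lam ≤ A x ⟨0, hn⟩ ⟨0, hn⟩)
    (hb : ∀ x ∈ Ω, ‖b x‖ ≤ γ) (hc : ∀ x ∈ Ω, 0 < c x) (hcK : ∀ x ∈ Ω, c x / lam ≤ K)
    (u : EuclideanSpace ℝ (Fin n) → ℝ)
    (hu2 : ContDiffOn ℝ 2 u Ω) (huc : ContinuousOn u (closure Ω))
    (hub : ∃ M : ℝ, ∀ x ∈ Ω, u x ≤ M)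
    (hbdry : ∀ x ∈ frontier Ω, u x ≤ 0)
    (hsub : ∀ x ∈ Ω,
      0 ≤ Matrix.trace (A x * hessMatrix u x) + ⟪b x, gradient u x⟫ + c x * u x)
    (hnarrow : Real.exp (1 + d * (γ / lam)) / (1 + d * (γ / lam)) * d ^ 2 * K < 1) :
    ∀ x ∈ Ω, u x ≤ 0 :=
  stmt_8_general n hn d lam γ K hd hlam hγ Ω hΩo hΩb hslab A b c hA hA11 hb hc hcK u hu2 huc hbdry
    hsub hnarrow
end

section
/- Let α, β > 0 with α > β, and define v(x) = sin(α x₁) e^{β φ(r)} on ℝⁿ, where r = √(x₂² + ⋯ + x_n²) and φ(r) = √(r²+1). Then at every point x with x₁ = π/(2α), the Hessian satisfies D²v(x) ≤ e^{βφ(r)} (−α² P₁ + β(β+1) Q) in the sense of quadratic forms, where P₁ is the orthogonal projection onto the x₁-axis and Q the orthogonal projection onto the span of x₂,…,x_n. -/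
/-!
Write `v = S * G` with `S y = sin (α y₁)` and `G = exp (β φ)`, `φ = √(r² + 1)`. On the crest
`α x₁ = π / 2` we have `S = 1`, `DS = 0` and `D²S[w, w] = -α² w₁²`, so the product rule leaves
`D²v[w, w] = -α² w₁² G + D²G[w, w]`. By the chain rule
`D²G[w, w] = G (β² (Dφ w)² + β D²φ[w, w])`, and both `(Dφ w)²` (by Cauchy–Schwarz, since
`|Dφ| = r / φ < 1`) and `D²φ[w, w]` (the `√''` term is nonpositive and `φ ≥ 1`) are at most
`|w'|² = ∑_{i ≥ 2} wᵢ²`.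
-/

open Real Finset

/-- Second directional derivative of `f` at `x` in directions `v`, `w`. -/
noncomputable def secondDeriv {n : ℕ} (f : EuclideanSpace ℝ (Fin n) → ℝ)
    (x v w : EuclideanSpace ℝ (Fin n)) : ℝ :=
  fderiv ℝ (fun y => fderiv ℝ f y v) x w

section SecondDirectionalDerivative

variable {E : Type*} [NormedAddCommGroup E] [NormedSpace ℝ E]

theorem differentiable_fderiv_apply_of_contDiff_two {f : E → ℝ} (hf : ContDiff ℝ 2 f) (w : E) :
    Differentiable ℝ (fun y => fderiv ℝ f y w) :=
  ((hf.fderiv_right (m := 1) le_rfl).clm_apply contDiff_const).differentiable one_ne_zero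

theorem fderiv_fderiv_mul_apply {f g : E → ℝ} (hf : ContDiff ℝ 2 f) (hg : ContDiff ℝ 2 g)
    (x w : E) :
    fderiv ℝ (fun y => fderiv ℝ (fun z => f z * g z) y w) x w =
      fderiv ℝ (fun y => fderiv ℝ f y w) x w * g x + 2 * (fderiv ℝ f x w * fderiv ℝ g x w) +
        f x * fderiv ℝ (fun y => fderiv ℝ g y w) x w := by
  have hf₁ := hf.differentiable two_ne_zero
  have hg₁ := hg.differentiable two_ne_zero
  have first : (fun y => fderiv ℝ (fun z => f z * g z) y w) =
      fun y => f y * fderiv ℝ g y w + g y * fderiv ℝ f y w := by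
    funext y
    rw [fderiv_fun_mul (hf₁ y) (hg₁ y)]
    rfl
  have second : HasFDerivAt (fun y => f y * fderiv ℝ g y w + g y * fderiv ℝ f y w) _ x :=
    ((hf₁ x).hasFDerivAt.mul (differentiable_fderiv_apply_of_contDiff_two hg w x).hasFDerivAt).add
      ((hg₁ x).hasFDerivAt.mul (differentiable_fderiv_apply_of_contDiff_two hf w x).hasFDerivAt)
  rw [first, second.fderiv]
  simp only [add_apply, smul_apply, smul_eq_mul]
  ring

theorem fderiv_comp_apply_of_hasDerivAt {f : E → ℝ} {g : ℝ → ℝ} {g' : ℝ} {y : E}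
    (hf : DifferentiableAt ℝ f y) (hg : HasDerivAt g g' (f y)) (w : E) :
    fderiv ℝ (fun z => g (f z)) y w = g' * fderiv ℝ f y w :=
  congrArg (· w) (hg.comp_hasFDerivAt y hf.hasFDerivAt).fderiv

theorem fderiv_fderiv_comp_apply {f : E → ℝ} {g g' : ℝ → ℝ} {g'' : ℝ} {x : E}
    (hf : ContDiff ℝ 2 f) (hg : ∀ y, HasDerivAt g (g' (f y)) (f y))
    (hg' : HasDerivAt g' g'' (f x)) (w : E) :
    fderiv ℝ (fun y => fderiv ℝ (fun z => g (f z)) y w) x w =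
      g'' * fderiv ℝ f x w ^ 2 + g' (f x) * fderiv ℝ (fun y => fderiv ℝ f y w) x w := by
  have hf₁ := hf.differentiable two_ne_zero
  have first : (fun y => fderiv ℝ (fun z => g (f z)) y w) =
      fun y => g' (f y) * fderiv ℝ f y w :=
    funext fun y => fderiv_comp_apply_of_hasDerivAt (hf₁ y) (hg y) w
  have second : HasFDerivAt (fun y => g' (f y) * fderiv ℝ f y w) _ x :=
    (hg'.comp_hasFDerivAt x (hf₁ x).hasFDerivAt).mul
      (differentiable_fderiv_apply_of_contDiff_two hf w x).hasFDerivAt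
  rw [first, second.fderiv]
  simp only [add_apply, smul_apply, smul_eq_mul, Function.comp_apply]
  ring

end SecondDirectionalDerivative

theorem hasDerivAt_sqrt_of_one_le {t : ℝ} (ht : 1 ≤ t) : HasDerivAt (√·) ((2 * √t)⁻¹) t := by
  simpa using Real.hasDerivAt_sqrt (one_pos.trans_le ht).ne'

theorem hasDerivAt_exp_const_mul (β t : ℝ) :
    HasDerivAt (fun s => exp (β * s)) (exp (β * t) * β) t := by
  simpa using ((hasDerivAt_id t).const_mul β).exp

theorem hasDerivAt_sin_const_mul (α t : ℝ) :
    HasDerivAt (fun s => sin (α * s)) (cos (α * t) * α) t := by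
  simpa using ((hasDerivAt_id t).const_mul α).sin

section SqrtSumSqAddOne

variable {E ι : Type*} [NormedAddCommGroup E] [NormedSpace ℝ E] (ℓ : ι → E →L[ℝ] ℝ)
  (F : Finset ι)

theorem fderiv_sum_sq_apply (y w : E) :
    fderiv ℝ (fun z => ∑ i ∈ F, ℓ i z ^ 2) y w = 2 * ∑ i ∈ F, ℓ i y * ℓ i w := by
  have h : HasFDerivAt (fun z => ∑ i ∈ F, ℓ i z ^ 2) (∑ i ∈ F, (2 * ℓ i y) • ℓ i) y :=
    HasFDerivAt.fun_sum fun i _ => by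
      simpa [mul_comm] using ((ℓ i).hasFDerivAt (x := y)).pow 2
  rw [h.fderiv]
  simp only [FunLike.coe_sum, Finset.sum_apply, smul_apply, smul_eq_mul, Finset.mul_sum,
    mul_assoc]

theorem fderiv_fderiv_sum_sq_apply (x w : E) :
    fderiv ℝ (fun y => fderiv ℝ (fun z => ∑ i ∈ F, ℓ i z ^ 2) y w) x w =
      2 * ∑ i ∈ F, ℓ i w ^ 2 := by
  have h : HasFDerivAt (fun y => 2 * ∑ i ∈ F, ℓ i y * ℓ i w)
      ((2 : ℝ) • ∑ i ∈ F, ℓ i w • ℓ i) x :=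
    (HasFDerivAt.fun_sum fun i _ => ((ℓ i).hasFDerivAt (x := x)).mul_const (ℓ i w)).const_mul 2
  rw [funext (fderiv_sum_sq_apply ℓ F · w), h.fderiv]
  simp only [smul_apply, FunLike.coe_sum, Finset.sum_apply, smul_eq_mul, sq]

theorem one_le_sum_sq_add_one (y : E) : 1 ≤ ∑ i ∈ F, ℓ i y ^ 2 + 1 :=
  le_add_of_nonneg_left (Finset.sum_nonneg fun _ _ => sq_nonneg _)

theorem contDiff_sqrt_sum_sq_add_one :
    ContDiff ℝ 2 (fun z => √(∑ i ∈ F, ℓ i z ^ 2 + 1)) :=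
  ContDiff.sqrt (by fun_prop) fun y => (one_pos.trans_le (one_le_sum_sq_add_one ℓ F y)).ne'

theorem fderiv_sqrt_sum_sq_add_one_apply (y w : E) :
    fderiv ℝ (fun z => √(∑ i ∈ F, ℓ i z ^ 2 + 1)) y w =
      (2 * √(∑ i ∈ F, ℓ i y ^ 2 + 1))⁻¹ * (2 * ∑ i ∈ F, ℓ i y * ℓ i w) := by
  rw [fderiv_comp_apply_of_hasDerivAt (f := fun z => ∑ i ∈ F, ℓ i z ^ 2 + 1) (by fun_prop)
    (hasDerivAt_sqrt_of_one_le (one_le_sum_sq_add_one ℓ F y)), fderiv_add_const,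
    fderiv_sum_sq_apply]

theorem fderiv_sqrt_sum_sq_add_one_apply_sq_le (x w : E) :
    fderiv ℝ (fun z => √(∑ i ∈ F, ℓ i z ^ 2 + 1)) x w ^ 2 ≤ ∑ i ∈ F, ℓ i w ^ 2 := by
  have hρ := one_le_sum_sq_add_one ℓ F x
  have hq : 0 ≤ ∑ i ∈ F, ℓ i w ^ 2 := Finset.sum_nonneg fun _ _ => sq_nonneg _
  have cauchySchwarz := Finset.sum_mul_sq_le_sq_mul_sq F (ℓ · x) (ℓ · w)
  rw [fderiv_sqrt_sum_sq_add_one_apply]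
  calc ((2 * √(∑ i ∈ F, ℓ i x ^ 2 + 1))⁻¹ * (2 * ∑ i ∈ F, ℓ i x * ℓ i w)) ^ 2
      = (∑ i ∈ F, ℓ i x * ℓ i w) ^ 2 / (∑ i ∈ F, ℓ i x ^ 2 + 1) := by
        rw [mul_pow, inv_pow, mul_pow, sq_sqrt (by linarith)]
        field_simp
    _ ≤ ∑ i ∈ F, ℓ i w ^ 2 := by
        rw [div_le_iff₀ (by linarith)]
        nlinarith

theorem fderiv_fderiv_sqrt_sum_sq_add_one_apply_le (x w : E) :
    fderiv ℝ (fun y => fderiv ℝ (fun z => √(∑ i ∈ F, ℓ i z ^ 2 + 1)) y w) x w ≤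
      ∑ i ∈ F, ℓ i w ^ 2 := by
  have hρ := one_le_sum_sq_add_one ℓ F x
  have hq : 0 ≤ ∑ i ∈ F, ℓ i w ^ 2 := Finset.sum_nonneg fun _ _ => sq_nonneg _
  have hsqrt : 1 ≤ √(∑ i ∈ F, ℓ i x ^ 2 + 1) := Real.one_le_sqrt.mpr hρ
  have hderiv : HasDerivAt (fun t => (2 * √t)⁻¹)
      (-(2 * (2 * √(∑ i ∈ F, ℓ i x ^ 2 + 1))⁻¹) / (2 * √(∑ i ∈ F, ℓ i x ^ 2 + 1)) ^ 2)
      (∑ i ∈ F, ℓ i x ^ 2 + 1) :=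
    ((hasDerivAt_sqrt_of_one_le hρ).const_mul 2).inv (by positivity)
  rw [fderiv_fderiv_comp_apply (f := fun z => ∑ i ∈ F, ℓ i z ^ 2 + 1) (by fun_prop)
    (fun y => hasDerivAt_sqrt_of_one_le (one_le_sum_sq_add_one ℓ F y)) hderiv]
  simp only [fderiv_add_const, fderiv_fderiv_sum_sq_apply]
  have concave : -(2 * (2 * √(∑ i ∈ F, ℓ i x ^ 2 + 1))⁻¹) /
      (2 * √(∑ i ∈ F, ℓ i x ^ 2 + 1)) ^ 2 ≤ 0 := by
    rw [neg_div]
    exact neg_nonpos.mpr (by positivity)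
  have hessianTerm : (2 * √(∑ i ∈ F, ℓ i x ^ 2 + 1))⁻¹ * (2 * ∑ i ∈ F, ℓ i w ^ 2) ≤
      ∑ i ∈ F, ℓ i w ^ 2 := by
    rw [← div_eq_inv_mul, div_le_iff₀ (by positivity)]
    nlinarith
  linarith [mul_nonpos_of_nonpos_of_nonneg concave
    (sq_nonneg (fderiv ℝ (fun z => ∑ i ∈ F, ℓ i z ^ 2) x w))]

theorem fderiv_fderiv_exp_mul_sqrt_sum_sq_add_one_apply_le {β : ℝ} (hβ : 0 ≤ β) (x w : E) :
    fderiv ℝ (fun y => fderiv ℝ (fun z => exp (β * √(∑ i ∈ F, ℓ i z ^ 2 + 1))) y w) x w ≤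
      exp (β * √(∑ i ∈ F, ℓ i x ^ 2 + 1)) * (β * (β + 1) * ∑ i ∈ F, ℓ i w ^ 2) := by
  rw [fderiv_fderiv_comp_apply (contDiff_sqrt_sum_sq_add_one ℓ F)
    (fun y => hasDerivAt_exp_const_mul β _) ((hasDerivAt_exp_const_mul β _).mul_const β)]
  have gradient := fderiv_sqrt_sum_sq_add_one_apply_sq_le ℓ F x w
  have hessian := fderiv_fderiv_sqrt_sum_sq_add_one_apply_le ℓ F x w
  have hβ₁ : 0 ≤ exp (β * √(∑ i ∈ F, ℓ i x ^ 2 + 1)) * β := by positivity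
  have hβ₂ : 0 ≤ exp (β * √(∑ i ∈ F, ℓ i x ^ 2 + 1)) * β * β := by positivity
  linarith [mul_le_mul_of_nonneg_left gradient hβ₂, mul_le_mul_of_nonneg_left hessian hβ₁]

end SqrtSumSqAddOne

section SinMulCLM

variable {E : Type*} [NormedAddCommGroup E] [NormedSpace ℝ E] (ℓ : E →L[ℝ] ℝ) (α : ℝ)

theorem fderiv_sin_mul_clm_apply (y w : E) :
    fderiv ℝ (fun z => sin (α * ℓ z)) y w = cos (α * ℓ y) * α * ℓ w := by
  rw [fderiv_comp_apply_of_hasDerivAt ℓ.differentiableAt (hasDerivAt_sin_const_mul α _),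
    ℓ.fderiv, mul_assoc]

theorem fderiv_fderiv_sin_mul_clm_apply (x w : E) :
    fderiv ℝ (fun y => fderiv ℝ (fun z => sin (α * ℓ z)) y w) x w =
      -(α ^ 2 * sin (α * ℓ x) * ℓ w ^ 2) := by
  have hsin' : HasDerivAt (fun s => cos (α * s) * α) (-sin (α * ℓ x) * α * α) (ℓ x) := by
    simpa using (((hasDerivAt_id (ℓ x)).const_mul α).cos).mul_const α
  rw [fderiv_fderiv_comp_apply ℓ.contDiff (fun y => hasDerivAt_sin_const_mul α _) hsin']
  simp only [ContinuousLinearMap.fderiv, fderiv_const_apply, zero_apply, mul_zero, add_zero]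
  ring

end SinMulCLM

theorem stmt_9 (n : ℕ) (hn : 0 < n) (α β : ℝ) (hβ : 0 < β) (hαβ : β < α)
    (v : EuclideanSpace ℝ (Fin n) → ℝ)
    (hv : v = fun x => Real.sin (α * x ⟨0, hn⟩) *
      Real.exp (β * Real.sqrt
        ((∑ i ∈ Finset.univ.filter (fun i : Fin n => i ≠ ⟨0, hn⟩), (x i) ^ 2) + 1))) :
    ∀ x : EuclideanSpace ℝ (Fin n), x ⟨0, hn⟩ = π / (2 * α) →
      ∀ w : EuclideanSpace ℝ (Fin n),
        secondDeriv v x w w ≤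
          Real.exp (β * Real.sqrt
            ((∑ i ∈ Finset.univ.filter (fun i : Fin n => i ≠ ⟨0, hn⟩), (x i) ^ 2) + 1)) *
          (-(α ^ 2) * (w ⟨0, hn⟩) ^ 2 +
            β * (β + 1) *
              ∑ i ∈ Finset.univ.filter (fun i : Fin n => i ≠ ⟨0, hn⟩), (w i) ^ 2) := by
  intro x hx w
  subst hv
  let ℓ : Fin n → EuclideanSpace ℝ (Fin n) →L[ℝ] ℝ := EuclideanSpace.proj
  set F := Finset.univ.filter (fun i : Fin n => i ≠ ⟨0, hn⟩)
  have crest : α * ℓ ⟨0, hn⟩ x = π / 2 := by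
    change α * x ⟨0, hn⟩ = π / 2
    rw [hx]
    field_simp [(hβ.trans hαβ).ne']
  change fderiv ℝ (fun y => fderiv ℝ (fun z => sin (α * ℓ ⟨0, hn⟩ z) *
    exp (β * √(∑ i ∈ F, ℓ i z ^ 2 + 1))) y w) x w ≤
      exp (β * √(∑ i ∈ F, ℓ i x ^ 2 + 1)) *
        (-(α ^ 2) * ℓ ⟨0, hn⟩ w ^ 2 + β * (β + 1) * ∑ i ∈ F, ℓ i w ^ 2)
  rw [fderiv_fderiv_mul_apply (by fun_prop)
      (contDiff_const.mul (contDiff_sqrt_sum_sq_add_one ℓ F)).exp,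
    fderiv_sin_mul_clm_apply, fderiv_fderiv_sin_mul_clm_apply, crest, sin_pi_div_two,
    cos_pi_div_two]
  have := fderiv_fderiv_exp_mul_sqrt_sum_sq_add_one_apply_le ℓ F hβ.le x w
  linarith
end
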